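/- Define c : 3^{<ℕ} → 2^{<ℕ} by c(∅) = ∅, and letterwise by 0 ↦ 00, 1 ↦ 01, 2 ↦ 10, concatenated. For a tree T on 3, let C(T) be the downward closure of c[T] in 2^{<ℕ}. Then for infinite trees T, S on 3 of the form T_A (containing all of 2^{<ℕ}, with 2's only at leaves), C(T) = C(S)_w for some w ∈ 2^{<ℕ} implies w is in the image of c, say w = c(u), and T = S_u. Conversely T = S_u implies C(T) = C(S)_{c(u)}. Hence T ↦ C(T) reduces the subtree quasi-order on trees on 3 of this form to the subtree quasi-order on trees on 2. -/

import Mathlib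

/-- The letterwise coding `c : 3^{<ℕ} → 2^{<ℕ}`, `0 ↦ 00`, `1 ↦ 01`, `2 ↦ 10`. -/
def cCode (s : List (Fin 3)) : List (Fin 2) :=
  s.flatMap (fun i => if i = 0 then [0, 0] else if i = 1 then [0, 1] else [1, 0])

/-- `C(T)`: the downward closure of `c[T]` in `2^{<ℕ}`. -/
def Ctree (T : Set (List (Fin 3))) : Set (List (Fin 2)) :=
  {s | ∃ u ∈ T, s <+: cCode u}

/-- Trees on `3` of the form `T_A`: trees (prefix-closed sets) containing all of
`2^{<ℕ}` (hence infinite), in which the letter `2` occurs only as a final entry. -/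
def GoodTree (T : Set (List (Fin 3))) : Prop :=
  (∀ u v : List (Fin 3), u <+: v → v ∈ T → u ∈ T) ∧
  ({s | ∀ x ∈ s, x ≠ 2} ⊆ T) ∧
  (∀ s ∈ T, (2 : Fin 3) ∈ s → ∃ t, s = t ++ [2] ∧ (2 : Fin 3) ∉ t) ∧
  T.Infinite

/-!
The code `c` is letterwise and reflects prefixes (`c t` a prefix of `c r` forces `t` a prefix
of `r`), so for a tree `R` we have `c t ∈ C(R) ↔ t ∈ R`, and shifting `C(S)` by `c u`
corresponds to shifting `S` by `u`. The remaining point is that a shift `w` with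
`C(T) = C(S)_w` cannot end in the middle of a block: a `1` in odd position of `C(R)` comes from
a `2`, which is a leaf of `R`, so it has a single successor, and this is incompatible with the
branching at the root of `C(T)`.
-/

lemma cCode_append (a b : List (Fin 3)) : cCode (a ++ b) = cCode a ++ cCode b :=
  List.flatMap_append

lemma cCode_cons (x : Fin 3) (s : List (Fin 3)) : cCode (x :: s) = cCode [x] ++ cCode s :=
  cCode_append [x] s

lemma exists_cCode_singleton_eq (x : Fin 3) : ∃ b₀ b₁ : Fin 2, cCode [x] = [b₀, b₁] := by
  fin_cases x <;> exact ⟨_, _, rfl⟩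

lemma cCode_singleton_append_prefix_iff {x y : Fin 3} {a b : List (Fin 2)} :
    cCode [x] ++ a <+: cCode [y] ++ b ↔ x = y ∧ a <+: b := by
  fin_cases x <;> fin_cases y <;> simp [cCode]

lemma cCode_prefix_cCode_iff {t r : List (Fin 3)} : cCode t <+: cCode r ↔ t <+: r := by
  refine ⟨fun h => ?_, fun ⟨s, hs⟩ => ⟨cCode s, by rw [← hs, cCode_append]⟩⟩
  induction t generalizing r with
  | nil => exact List.nil_prefix
  | cons x t ih =>
    cases r with
    | nil =>
      obtain ⟨b₀, b₁, hx⟩ := exists_cCode_singleton_eq x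
      rw [cCode_cons, hx] at h
      simp [cCode] at h
    | cons y r =>
      rw [cCode_cons x, cCode_cons y, cCode_singleton_append_prefix_iff] at h
      exact List.cons_prefix_cons.mpr ⟨h.1, ih h.2⟩

lemma eq_cCode_or_eq_cCode_append_of_prefix {w : List (Fin 2)} {s : List (Fin 3)}
    (h : w <+: cCode s) :
    (∃ u, u <+: s ∧ w = cCode u) ∨ ∃ u x b, u ++ [x] <+: s ∧ w = cCode u ++ [b] := by
  induction s generalizing w with
  | nil => exact .inl ⟨[], List.nil_prefix, List.prefix_nil.mp h⟩
  | cons x s ih =>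
    obtain ⟨b₀, b₁, hx⟩ := exists_cCode_singleton_eq x
    rw [cCode_cons, hx] at h
    match w, h with
    | [], _ => exact .inl ⟨[], List.nil_prefix, rfl⟩
    | [a], h =>
      exact .inr ⟨[], x, a, List.cons_prefix_cons.mpr ⟨rfl, List.nil_prefix⟩, rfl⟩
    | a :: a' :: w, h =>
      simp only [List.cons_append, List.nil_append, List.cons_prefix_cons] at h
      obtain ⟨rfl, rfl, hw⟩ := h
      rcases ih hw with ⟨u, hu, rfl⟩ | ⟨u, y, b, hu, rfl⟩
      · exact .inl ⟨x :: u, List.cons_prefix_cons.mpr ⟨rfl, hu⟩, by rw [cCode_cons, hx]; rfl⟩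
      · exact .inr ⟨x :: u, y, b, List.cons_prefix_cons.mpr ⟨rfl, hu⟩,
          by rw [cCode_cons, hx]; rfl⟩

lemma cCode_mem_Ctree_iff {R : Set (List (Fin 3))}
    (hR : ∀ u v : List (Fin 3), u <+: v → v ∈ R → u ∈ R) (t : List (Fin 3)) :
    cCode t ∈ Ctree R ↔ t ∈ R :=
  ⟨fun ⟨_, hr, hp⟩ => hR _ _ (cCode_prefix_cCode_iff.mp hp) hr,
    fun ht => ⟨t, ht, List.prefix_rfl⟩⟩

section LeafTwo

variable {R : Set (List (Fin 3))}
  (h2 : ∀ s ∈ R, (2 : Fin 3) ∈ s → ∃ t, s = t ++ [2] ∧ (2 : Fin 3) ∉ t)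
include h2

lemma eq_nil_of_append_two_cons_mem {u r : List (Fin 3)} (h : u ++ 2 :: r ∈ R) : r = [] := by
  obtain ⟨t, ht, h2t⟩ := h2 _ h (by simp)
  rcases List.eq_nil_or_concat r with rfl | ⟨r, b, rfl⟩
  · rfl
  · have : u ++ 2 :: r = t :=
      List.append_inj_left' (t₁ := [b]) (t₂ := [2]) (by simpa using ht) rfl
    exact absurd (this ▸ by simp) h2t

lemma not_two_mem_of_append_cons_mem {u r : List (Fin 3)} {x : Fin 3} (h : u ++ x :: r ∈ R) :
    (2 : Fin 3) ∉ u := by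
  intro hu
  obtain ⟨u₁, u₂, rfl⟩ := List.append_of_mem hu
  have := eq_nil_of_append_two_cons_mem h2 (u := u₁) (r := u₂ ++ x :: r) (by simpa using h)
  simp at this

lemma length_le_one_of_cCode_append_one_cons_mem_Ctree {t : List (Fin 3)} {z : List (Fin 2)}
    (h : cCode t ++ 1 :: z ∈ Ctree R) : z.length ≤ 1 := by
  obtain ⟨s, hs, hp⟩ := h
  obtain ⟨r, rfl⟩ := cCode_prefix_cCode_iff.mp ((List.prefix_append _ _).trans hp)
  rw [cCode_append, List.prefix_append_right_inj] at hp
  cases r with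
  | nil => simp [cCode] at hp
  | cons y r =>
    obtain rfl : y = 2 := by
      rw [cCode_cons] at hp
      generalize cCode r = l at hp
      fin_cases y
      · simp [cCode] at hp
      · simp [cCode] at hp
      · rfl
    obtain rfl := eq_nil_of_append_two_cons_mem h2 hs
    simpa [cCode] using hp.length_le

end LeafTwo

lemma Ctree_eq_of_eq_subtree {T S : Set (List (Fin 3))} {u : List (Fin 3)}
    (hu : T = {v | u ++ v ∈ S}) : Ctree T = {v | cCode u ++ v ∈ Ctree S} := by
  subst hu
  ext v
  constructor
  · rintro ⟨t, ht, hp⟩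
    exact ⟨u ++ t, ht, by rwa [cCode_append, List.prefix_append_right_inj]⟩
  · rintro ⟨s, hs, hp⟩
    obtain ⟨r, rfl⟩ := cCode_prefix_cCode_iff.mp ((List.prefix_append _ _).trans hp)
    rw [cCode_append, List.prefix_append_right_inj] at hp
    exact ⟨r, hs, hp⟩

lemma eq_subtree_of_Ctree_eq {T S : Set (List (Fin 3))} {u : List (Fin 3)}
    (hT : ∀ u v : List (Fin 3), u <+: v → v ∈ T → u ∈ T)
    (hS : ∀ u v : List (Fin 3), u <+: v → v ∈ S → u ∈ S)
    (h : Ctree T = {v | cCode u ++ v ∈ Ctree S}) : T = {v | u ++ v ∈ S} := by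
  ext t
  rw [← cCode_mem_Ctree_iff hT, h, Set.mem_ofPred_eq, Set.mem_ofPred_eq, ← cCode_append,
    cCode_mem_Ctree_iff hS]

lemma mem_of_not_two_mem {R : Set (List (Fin 3))} (hR : GoodTree R) {s : List (Fin 3)}
    (hs : (2 : Fin 3) ∉ s) : s ∈ R :=
  hR.2.1 fun _ hx h => hs (h ▸ hx)

/-- If `w = c(u)·b` had odd length: for `b = 1` the word `00 ∈ C(T)` would have to fit below
a final letter `2` of `S`; for `b = 0`, `u·10 ∈ S` puts `w·100` into `C(S)`, hence `100` into
`C(T)`, below the leaf `[2]`. -/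
lemma exists_eq_cCode_of_Ctree_eq {T S : Set (List (Fin 3))} (hT : GoodTree T)
    (hS : GoodTree S) {w : List (Fin 2)} (h : Ctree T = {v | w ++ v ∈ Ctree S}) :
    ∃ u, w = cCode u := by
  have hmem : ∀ v, v ∈ Ctree T ↔ w ++ v ∈ Ctree S := fun v => by rw [h]; rfl
  obtain ⟨s, hs, hws⟩ : w ∈ Ctree S := by
    simpa using (hmem []).mp ⟨[], mem_of_not_two_mem hT (by simp), List.nil_prefix⟩
  rcases eq_cCode_or_eq_cCode_append_of_prefix hws with ⟨u, -, rfl⟩ | ⟨u, _, b, hux, rfl⟩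
  · exact ⟨u, rfl⟩
  exfalso
  fin_cases b
  · obtain ⟨r, rfl⟩ := hux
    have hu : (2 : Fin 3) ∉ u :=
      not_two_mem_of_append_cons_mem hS.2.2.1 (r := r) (by simpa using hs)
    have hu10 : u ++ [1, 0] ∈ S := mem_of_not_two_mem hS (by simp [hu])
    have h100 : cCode [] ++ 1 :: [0, 0] ∈ Ctree T :=
      (hmem _).mpr ⟨_, hu10, by simp [cCode]⟩
    simpa using length_le_one_of_cCode_append_one_cons_mem_Ctree hT.2.2.1 h100
  · have h00 : cCode u ++ 1 :: [0, 0] ∈ Ctree S := by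
      simpa using (hmem [0, 0]).mp ⟨[0], mem_of_not_two_mem hT (by simp), by simp [cCode]⟩
    simpa using length_le_one_of_cCode_append_one_cons_mem_Ctree hS.2.2.1 h00

/-- `T ↦ C(T)` reduces the subtree quasi-order on trees on `3` of the form `T_A` to the
subtree quasi-order on trees on `2`: if `C(T) = C(S)_w` then `w = c(u)` for some `u` and
`T = S_u`; conversely `T = S_u` implies `C(T) = C(S)_{c(u)}`. -/
theorem Ctree_reduction (T S : Set (List (Fin 3)))
    (hT : GoodTree T) (hS : GoodTree S) :
    (∀ w : List (Fin 2), Ctree T = {v | w ++ v ∈ Ctree S} →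
      ∃ u : List (Fin 3), w = cCode u ∧ T = {v | u ++ v ∈ S}) ∧
    (∀ u : List (Fin 3), T = {v | u ++ v ∈ S} →
      Ctree T = {v | cCode u ++ v ∈ Ctree S}) := by
  refine ⟨fun w hw => ?_, fun u hu => Ctree_eq_of_eq_subtree hu⟩
  obtain ⟨u, rfl⟩ := exists_eq_cCode_of_Ctree_eq hT hS hw
  exact ⟨u, rfl, eq_subtree_of_Ctree_eq hT.1 hS.1 hw⟩
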